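/- arXiv:2406.10369 — 2 statements merged into one kernel-verified Lean document; each statement's English description precedes it below -/
import Mathlib

section
/- Let IOD graphs G and G' both be partially actionable and both satisfy the no dangling nodes condition. Then any crossover child produced from an input-contiguous IO partition (Ψ,Ω) of input parent G and an output-contiguous IO partition (Ψ',Ω') of output parent G' (the partitions being crossover compatible) is partially actionable: the child contains a directed path from some input in I to some output in O'. -/
/-- An Input/Output Directed (IOD) graph: a set of nodes `N` inside a common
vertex type `V`, a set of directed edges `E ⊆ N × N`, and disjoint subsets
`I, O ⊆ N` (inputs and outputs) such that no edge ends at a node of `I`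
and no edge starts at a node of `O`. -/
structure IODGraph (V : Type) where
  N : Set V
  E : Set (V × V)
  I : Set V
  O : Set V
  I_sub : I ⊆ N
  O_sub : O ⊆ N
  disjIO : Disjoint I O
  E_mem : ∀ e ∈ E, e.1 ∈ N ∧ e.2 ∈ N
  no_into_I : ∀ e ∈ E, e.2 ∉ I
  no_outof_O : ∀ e ∈ E, e.1 ∉ O

namespace IODGraph

variable {V : Type}

/-- `G.Reach a b`: there is a directed path (possibly trivial) from `a` to `b` in `G`. -/
def Reach (G : IODGraph V) : V → V → Prop :=
  Relation.ReflTransGen (fun x y => (x, y) ∈ G.E)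

/-- Reachability by a directed path lying entirely within the set `S`. -/
def ReachWithin (G : IODGraph V) (S : Set V) : V → V → Prop :=
  Relation.ReflTransGen (fun x y => (x, y) ∈ G.E ∧ x ∈ S ∧ y ∈ S)

/-- `n` lies on a directed path from some input to some output. -/
def OnIOPath (G : IODGraph V) (n : V) : Prop :=
  ∃ i ∈ G.I, ∃ o ∈ G.O, G.Reach i n ∧ G.Reach n o

/-- The no dangling nodes condition: every intermediate node lies on a
directed path from some input to some output. -/
def NoDangling (G : IODGraph V) : Prop :=
  ∀ n ∈ G.N \ (G.I ∪ G.O), G.OnIOPath n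

/-- Partially informative: a path from some input to some output. -/
def PartiallyInformative (G : IODGraph V) : Prop :=
  ∃ i ∈ G.I, ∃ o ∈ G.O, G.Reach i o

/-- Very informative: from every input there is a path to some output. -/
def VeryInformative (G : IODGraph V) : Prop :=
  ∀ i ∈ G.I, ∃ o ∈ G.O, G.Reach i o

/-- Fully informative: for every input and every output there is a path. -/
def FullyInformative (G : IODGraph V) : Prop :=
  ∀ i ∈ G.I, ∀ o ∈ G.O, G.Reach i o

/-- Non-informative: no path from any input to any output. -/
def NonInformative (G : IODGraph V) : Prop :=
  ∀ i ∈ G.I, ∀ o ∈ G.O, ¬ G.Reach i o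

/-- Partially actionable: a path from some input to some output. -/
def PartiallyActionable (G : IODGraph V) : Prop :=
  ∃ i ∈ G.I, ∃ o ∈ G.O, G.Reach i o

/-- Very actionable: for every output there is a path from some input to it. -/
def VeryActionable (G : IODGraph V) : Prop :=
  ∀ o ∈ G.O, ∃ i ∈ G.I, G.Reach i o

/-- Fully actionable: for every input and every output there is a path. -/
def FullyActionable (G : IODGraph V) : Prop :=
  ∀ i ∈ G.I, ∀ o ∈ G.O, G.Reach i o

/-- An IO partition `(Ψ, Ω)` of the node set of `G`, with `I ⊆ Ψ` and `O ⊆ Ω`. -/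
structure IOPartition (G : IODGraph V) where
  Psi : Set V
  Om : Set V
  union_eq : Psi ∪ Om = G.N
  disj : Disjoint Psi Om
  I_sub : G.I ⊆ Psi
  O_sub : G.O ⊆ Om

/-- Forward links of an IO partition: edges from `Ψ` to `Ω`. -/
def Fwd (G : IODGraph V) (P : IOPartition G) : Set (V × V) :=
  {e | e ∈ G.E ∧ e.1 ∈ P.Psi ∧ e.2 ∈ P.Om}

/-- Backward links of an IO partition: edges from `Ω` to `Ψ`. -/
def Bwd (G : IODGraph V) (P : IOPartition G) : Set (V × V) :=
  {e | e ∈ G.E ∧ e.1 ∈ P.Om ∧ e.2 ∈ P.Psi}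

/-- The input part `Ψ` is contiguous: every non-input node of `Ψ` is reached
from some input by a path inside `Ψ`. -/
def InputContiguous (G : IODGraph V) (P : IOPartition G) : Prop :=
  ∀ n ∈ P.Psi \ G.I, ∃ i ∈ G.I, G.ReachWithin P.Psi i n

/-- The output part `Ω` is contiguous: every non-output node of `Ω` reaches
some output by a path inside `Ω`. -/
def OutputContiguous (G : IODGraph V) (P : IOPartition G) : Prop :=
  ∀ n ∈ P.Om \ G.O, ∃ o ∈ G.O, G.ReachWithin P.Om n o

/-- Crossover compatibility of two IOD graphs with chosen IO partitions. -/
structure CrossCompat (G G' : IODGraph V) (P : IOPartition G) (P' : IOPartition G') : Prop where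
  psi_om' : P.Psi ∩ P'.Om = ∅
  psi'_om : P'.Psi ∩ P.Om = ∅
  finF : (Fwd G P).Finite
  finF' : (Fwd G' P').Finite
  finB : (Bwd G P).Finite
  finB' : (Bwd G' P').Finite
  cardF : (Fwd G P).ncard = (Fwd G' P').ncard
  cardB : (Bwd G P).ncard = (Bwd G' P').ncard

/-- The crossover membrane induced by bijections `g : F(Ψ,Ω) ≃ F(Ψ',Ω')` and
`h : B(Ψ',Ω') ≃ B(Ψ,Ω)`: the edges `(source of f, destination of g f)` for
forward links `f`, and `(source of b', destination of h b')` for backward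
links `b'` of the output parent. -/
def membraneEdges (G G' : IODGraph V) (P : IOPartition G) (P' : IOPartition G')
    (g : Fwd G P ≃ Fwd G' P') (h : Bwd G' P' ≃ Bwd G P) : Set (V × V) :=
  (Set.range fun f : Fwd G P => ((f : V × V).1, (g f : V × V).2)) ∪
  (Set.range fun b' : Bwd G' P' => ((b' : V × V).1, (h b' : V × V).2))

/-- The edge set of the crossover child: edges of `G` within `Ψ`, edges of `G'`
within `Ω'`, and the crossover membrane. -/
def childEdges (G G' : IODGraph V) (P : IOPartition G) (P' : IOPartition G')
    (g : Fwd G P ≃ Fwd G' P') (h : Bwd G' P' ≃ Bwd G P) : Set (V × V) :=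
  {e | e ∈ G.E ∧ e.1 ∈ P.Psi ∧ e.2 ∈ P.Psi} ∪
  {e | e ∈ G'.E ∧ e.1 ∈ P'.Om ∧ e.2 ∈ P'.Om} ∪
  membraneEdges G G' P P' g h

/-- Reachability (directed paths) in the crossover child. -/
def childReach (G G' : IODGraph V) (P : IOPartition G) (P' : IOPartition G')
    (g : Fwd G P ≃ Fwd G' P') (h : Bwd G' P' ≃ Bwd G P) : V → V → Prop :=
  Relation.ReflTransGen (fun x y => (x, y) ∈ childEdges G G' P P' g h)

end IODGraph

open IODGraph

/-!
A path of `G` from an input to an output must cross `(Ψ, Ω)` along some forward link `f`.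
Input contiguity reaches the source of `f` from an input inside `Ψ`; the membrane edge of `f`
leads to the destination of `g f`, which lies in `Ω'`; output contiguity reaches an output of
`G'` from there inside `Ω'`. All three pieces are edges of the child.
-/

namespace IODGraph

variable {V : Type}

theorem fwd_nonempty_of_reach {G : IODGraph V} (P : IOPartition G) {x o : V}
    (hr : G.Reach x o) (hx : x ∈ P.Psi) (ho : o ∈ P.Om) : (Fwd G P).Nonempty := by
  induction hr using Relation.ReflTransGen.head_induction_on with
  | refl => exact absurd ho (Set.disjoint_left.mp P.disj hx)
  | @head a b hab _ ih =>
    have hbN : b ∈ P.Psi ∪ P.Om := P.union_eq ▸ (G.E_mem _ hab).2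
    rcases hbN with hb | hb
    · exact ih hb
    · exact ⟨(a, b), hab, hx, hb⟩

theorem PartiallyActionable.fwd_nonempty {G : IODGraph V} (hG : PartiallyActionable G)
    (P : IOPartition G) : (Fwd G P).Nonempty :=
  let ⟨_, hi, _, ho, hr⟩ := hG
  fwd_nonempty_of_reach P hr (P.I_sub hi) (P.O_sub ho)

theorem InputContiguous.exists_reachWithin {G : IODGraph V} {P : IOPartition G}
    (hIC : InputContiguous G P) {n : V} (hn : n ∈ P.Psi) :
    ∃ i ∈ G.I, G.ReachWithin P.Psi i n := by
  by_cases hnI : n ∈ G.I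
  · exact ⟨n, hnI, .refl⟩
  · exact hIC n ⟨hn, hnI⟩

theorem OutputContiguous.exists_reachWithin {G : IODGraph V} {P : IOPartition G}
    (hOC : OutputContiguous G P) {n : V} (hn : n ∈ P.Om) :
    ∃ o ∈ G.O, G.ReachWithin P.Om n o := by
  by_cases hnO : n ∈ G.O
  · exact ⟨n, hnO, .refl⟩
  · exact hOC n ⟨hn, hnO⟩

section Child

variable {G G' : IODGraph V} {P : IOPartition G} {P' : IOPartition G'}
  {g : Fwd G P ≃ Fwd G' P'} {h : Bwd G' P' ≃ Bwd G P}

theorem ReachWithin.childReach_of_psi {a b : V} (hr : G.ReachWithin P.Psi a b) :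
    childReach G G' P P' g h a b :=
  Relation.ReflTransGen.mono (fun _ _ hxy => Or.inl (Or.inl hxy)) _ _ hr

theorem ReachWithin.childReach_of_om {a b : V} (hr : G'.ReachWithin P'.Om a b) :
    childReach G G' P P' g h a b :=
  Relation.ReflTransGen.mono (fun _ _ hxy => Or.inl (Or.inr hxy)) _ _ hr

theorem childReach_fwd_membrane (f : Fwd G P) :
    childReach G G' P P' g h (f : V × V).1 (g f : V × V).2 :=
  .single (Or.inr (Or.inl ⟨f, rfl⟩))

end Child

end IODGraph

open IODGraph

theorem crossover_child_partially_actionable_general {V : Type} (G G' : IODGraph V)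
    (hG : PartiallyActionable G)
    (P : IOPartition G) (P' : IOPartition G')
    (hIC : InputContiguous G P) (hOC : OutputContiguous G' P')
    (g : Fwd G P ≃ Fwd G' P') (h : Bwd G' P' ≃ Bwd G P) :
    ∃ i ∈ G.I, ∃ o' ∈ G'.O, childReach G G' P P' g h i o' := by
  obtain ⟨e, he⟩ := hG.fwd_nonempty P
  let f : Fwd G P := ⟨e, he⟩
  obtain ⟨i, hi, hri⟩ := hIC.exists_reachWithin he.2.1
  obtain ⟨o', ho', hro⟩ := hOC.exists_reachWithin (g f).2.2.2
  exact ⟨i, hi, o', ho',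
    (hri.childReach_of_psi.trans (childReach_fwd_membrane f)).trans hro.childReach_of_om⟩

/-- partially actionable parents satisfying the no dangling
nodes condition, crossed over along an input-contiguous partition of the input
parent and an output-contiguous partition of the output parent, yield a
partially actionable child. -/
theorem crossover_child_partially_actionable {V : Type} (G G' : IODGraph V)
    (hG : PartiallyActionable G) (hG' : PartiallyActionable G')
    (hdG : NoDangling G) (hdG' : NoDangling G')
    (P : IOPartition G) (P' : IOPartition G')
    (hIC : InputContiguous G P) (hOC : OutputContiguous G' P')
    (hc : CrossCompat G G' P P')
    (g : Fwd G P ≃ Fwd G' P') (h : Bwd G' P' ≃ Bwd G P) :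
    ∃ i ∈ G.I, ∃ o' ∈ G'.O, childReach G G' P P' g h i o' :=
  crossover_child_partially_actionable_general G G' hG P P' hIC hOC g h
end

section
/- There exist IOD graphs G and G', both fully actionable and both satisfying the no dangling nodes condition, together with a contiguous IO partition (Ψ,Ω) of G and a contiguous IO partition (Ψ',Ω') of G' that are crossover compatible, and a crossover membrane, such that the resulting crossover child is not fully actionable (some input i ∈ I and some output o' ∈ O' have no directed path from i to o' in the child). -/
/-!
In the input parent the inputs `0, 1` both feed the node `2`, which feeds the output
`3`; in the output parent the input `4` feeds `5`, which fans out to the outputs `6, 7`. Cutting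
each parent where it branches leaves `Ψ = {0, 1}` and `Ω' = {6, 7}` without internal edges, and
matching the two forward links crosswise turns the child into the perfect matching
`0 → 6, 1 → 7`, so the input `0` does not reach the output `7`.
-/

theorem Relation.ReflTransGen.mem_of_closed {α : Type*} {r : α → α → Prop} {A : Set α}
    (hA : ∀ x y, r x y → x ∈ A → y ∈ A) {a b : α} (hab : Relation.ReflTransGen r a b)
    (ha : a ∈ A) : b ∈ A := by
  induction hab with
  | refl => exact ha
  | tail _ hbc ih => exact hA _ _ hbc ih

namespace IODGraph

variable {V : Type} {G G' : IODGraph V} {P : IOPartition G} {P' : IOPartition G'}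

theorem CrossCompat.of_equiv (hΨΩ' : P.Psi ∩ P'.Om = ∅) (hΨ'Ω : P'.Psi ∩ P.Om = ∅)
    (hF : (Fwd G P).Finite) (hB : (Bwd G' P').Finite)
    (g : Fwd G P ≃ Fwd G' P') (h : Bwd G' P' ≃ Bwd G P) : CrossCompat G G' P P' :=
  have : Finite (Fwd G P) := hF
  have : Finite (Bwd G' P') := hB
  { psi_om' := hΨΩ'
    psi'_om := hΨ'Ω
    finF := hF
    finF' := Finite.of_equiv _ g
    finB := Finite.of_equiv _ h
    finB' := hB
    cardF := Set.ncard_congr' g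
    cardB := (Set.ncard_congr' h).symm }

end IODGraph

open IODGraph

namespace CrossoverCounterexample

def inputParent : IODGraph (Fin 8) where
  N := {0, 1, 2, 3}
  E := {(0, 2), (1, 2), (2, 3)}
  I := {0, 1}
  O := {3}
  I_sub := by simp [Set.insert_subset_iff]
  O_sub := by simp
  disjIO := by simp
  E_mem := by simp
  no_into_I := by simp
  no_outof_O := by simp

def outputParent : IODGraph (Fin 8) where
  N := {4, 5, 6, 7}
  E := {(4, 5), (5, 6), (5, 7)}
  I := {4}
  O := {6, 7}
  I_sub := by simp
  O_sub := by simp [Set.insert_subset_iff]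
  disjIO := by simp
  E_mem := by simp
  no_into_I := by simp
  no_outof_O := by simp

def inputPartition : IOPartition inputParent where
  Psi := {0, 1}
  Om := {2, 3}
  union_eq := by rw [Set.insert_union, Set.singleton_union]; rfl
  disj := by simp
  I_sub := subset_rfl
  O_sub := by simp [inputParent]

def outputPartition : IOPartition outputParent where
  Psi := {4, 5}
  Om := {6, 7}
  union_eq := by rw [Set.insert_union, Set.singleton_union]; rfl
  disj := by simp
  I_sub := by simp [outputParent]
  O_sub := subset_rfl

theorem fwd_inputPartition : Fwd inputParent inputPartition = {(0, 2), (1, 2)} := by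
  ext ⟨a, b⟩
  simp only [Fwd, inputParent, inputPartition, Set.mem_ofPred_eq, Set.mem_insert_iff,
    Set.mem_singleton_iff, Prod.mk.injEq]
  omega

theorem fwd_outputPartition : Fwd outputParent outputPartition = {(5, 6), (5, 7)} := by
  ext ⟨a, b⟩
  simp only [Fwd, outputParent, outputPartition, Set.mem_ofPred_eq, Set.mem_insert_iff,
    Set.mem_singleton_iff, Prod.mk.injEq]
  omega

theorem bwd_inputPartition : Bwd inputParent inputPartition = ∅ := by
  ext ⟨a, b⟩
  simp only [Bwd, inputParent, inputPartition, Set.mem_ofPred_eq, Set.mem_insert_iff,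
    Set.mem_singleton_iff, Prod.mk.injEq, Set.mem_empty_iff_false, iff_false]
  omega

theorem bwd_outputPartition : Bwd outputParent outputPartition = ∅ := by
  ext ⟨a, b⟩
  simp only [Bwd, outputParent, outputPartition, Set.mem_ofPred_eq, Set.mem_insert_iff,
    Set.mem_singleton_iff, Prod.mk.injEq, Set.mem_empty_iff_false, iff_false]
  omega

theorem bijOn_crossFwd : Set.BijOn (fun e : Fin 8 × Fin 8 => ((5 : Fin 8), e.1 + 6))
    (Fwd inputParent inputPartition) (Fwd outputParent outputPartition) := by
  rw [fwd_inputPartition, fwd_outputPartition]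
  refine ⟨?_, ?_, ?_⟩
  · simp [Set.MapsTo]
  · simp [Set.InjOn]
  · simp [Set.SurjOn, Set.insert_subset_iff]

noncomputable def crossFwd : Fwd inputParent inputPartition ≃ Fwd outputParent outputPartition :=
  bijOn_crossFwd.equiv _

def crossBwd : Bwd outputParent outputPartition ≃ Bwd inputParent inputPartition :=
  Equiv.setCongr (bwd_outputPartition.trans bwd_inputPartition.symm)

theorem membraneEdges_cross :
    membraneEdges inputParent outputParent inputPartition outputPartition crossFwd crossBwd =
      {(0, 6), (1, 7)} := by
  have : IsEmpty (Bwd outputParent outputPartition) := Set.isEmpty_coe_sort.mpr bwd_outputPartition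
  rw [membraneEdges, Set.range_eq_empty (fun b' : Bwd outputParent outputPartition => _),
    Set.union_empty]
  change Set.range (fun f : Fwd inputParent inputPartition => (f.1.1, f.1.1 + 6)) = _
  rw [← Set.image_eq_range (fun e : Fin 8 × Fin 8 => (e.1, e.1 + 6)), fwd_inputPartition,
    Set.image_pair]
  rfl

theorem childEdges_cross :
    childEdges inputParent outputParent inputPartition outputPartition crossFwd crossBwd =
      {(0, 6), (1, 7)} := by
  rw [childEdges, membraneEdges_cross]
  ext ⟨a, b⟩
  simp only [inputParent, outputParent, inputPartition, outputPartition, Set.mem_union,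
    Set.mem_ofPred_eq, Set.mem_insert_iff, Set.mem_singleton_iff, Prod.mk.injEq]
  omega

theorem not_childReach_cross :
    ¬ childReach inputParent outputParent inputPartition outputPartition crossFwd crossBwd 0 7 := by
  intro h07
  have : (7 : Fin 8) ∈ ({0, 6} : Set (Fin 8)) := by
    refine h07.mem_of_closed ?_ (by simp)
    intro x y hxy hx
    rw [childEdges_cross] at hxy
    simp only [Set.mem_insert_iff, Set.mem_singleton_iff, Prod.ext_iff] at hxy hx ⊢
    omega
  simp at this

theorem fullyActionable_inputParent : FullyActionable inputParent := by
  have h23 : inputParent.Reach 2 3 := .single (by simp [inputParent])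
  rintro i (rfl | rfl) o rfl
  all_goals exact .head (by simp [inputParent]) h23

theorem fullyActionable_outputParent : FullyActionable outputParent := by
  have h45 : (4, 5) ∈ outputParent.E := by simp [outputParent]
  rintro i rfl o (rfl | rfl)
  all_goals exact .head h45 (.single (by simp [outputParent]))

theorem noDangling_inputParent : NoDangling inputParent := by
  rintro n ⟨hN, hIO⟩
  obtain rfl : n = 2 := by
    simp only [inputParent, Set.mem_union, Set.mem_insert_iff, Set.mem_singleton_iff] at hN hIO
    omega
  exact ⟨0, by simp [inputParent], 3, by simp [inputParent],
    .single (by simp [inputParent]), .single (by simp [inputParent])⟩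

theorem noDangling_outputParent : NoDangling outputParent := by
  rintro n ⟨hN, hIO⟩
  obtain rfl : n = 5 := by
    simp only [outputParent, Set.mem_union, Set.mem_insert_iff, Set.mem_singleton_iff] at hN hIO
    omega
  exact ⟨4, by simp [outputParent], 6, by simp [outputParent],
    .single (by simp [outputParent]), .single (by simp [outputParent])⟩

theorem inputContiguous_inputPartition : InputContiguous inputParent inputPartition :=
  fun _ hn => absurd hn.1 hn.2

theorem outputContiguous_inputPartition : OutputContiguous inputParent inputPartition := by
  rintro n ⟨hΩ, hO⟩
  obtain rfl : n = 2 := by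
    simp only [inputParent, inputPartition, Set.mem_insert_iff, Set.mem_singleton_iff] at hΩ hO
    omega
  exact ⟨3, rfl, .single ⟨by simp [inputParent], by simp [inputPartition]⟩⟩

theorem inputContiguous_outputPartition : InputContiguous outputParent outputPartition := by
  rintro n ⟨hΨ, hI⟩
  obtain rfl : n = 5 := by
    simp only [outputParent, outputPartition, Set.mem_insert_iff, Set.mem_singleton_iff] at hΨ hI
    omega
  exact ⟨4, rfl, .single ⟨by simp [outputParent], by simp [outputPartition]⟩⟩

theorem outputContiguous_outputPartition : OutputContiguous outputParent outputPartition :=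
  fun _ hn => absurd hn.1 hn.2

theorem crossCompat : CrossCompat inputParent outputParent inputPartition outputPartition := by
  refine .of_equiv ?_ ?_ (Set.toFinite _) (Set.toFinite _) crossFwd crossBwd <;>
  · ext
    simp only [inputPartition, outputPartition, Set.mem_inter_iff, Set.mem_insert_iff,
      Set.mem_singleton_iff, Set.mem_empty_iff_false, iff_false]
    omega

end CrossoverCounterexample

open CrossoverCounterexample in
/-- full actionability need not be preserved: there are fully
actionable parents satisfying the no dangling nodes condition, with
contiguous, crossover compatible IO partitions and a crossover membrane,
whose crossover child is not fully actionable. -/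
theorem full_actionability_not_preserved :
    ∃ (V : Type) (G G' : IODGraph V) (P : IOPartition G) (P' : IOPartition G')
      (g : Fwd G P ≃ Fwd G' P') (h : Bwd G' P' ≃ Bwd G P),
      FullyActionable G ∧ FullyActionable G' ∧
      NoDangling G ∧ NoDangling G' ∧
      InputContiguous G P ∧ OutputContiguous G P ∧
      InputContiguous G' P' ∧ OutputContiguous G' P' ∧
      CrossCompat G G' P P' ∧
      (∃ i ∈ G.I, ∃ o' ∈ G'.O, ¬ childReach G G' P P' g h i o') :=
  ⟨Fin 8, inputParent, outputParent, inputPartition, outputPartition, crossFwd, crossBwd,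
    fullyActionable_inputParent, fullyActionable_outputParent,
    noDangling_inputParent, noDangling_outputParent,
    inputContiguous_inputPartition, outputContiguous_inputPartition,
    inputContiguous_outputPartition, outputContiguous_outputPartition, crossCompat,
    0, by simp [inputParent], 7, by simp [outputParent], not_childReach_cross⟩
end
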